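/- For every r > 2/3, with u_b(r) the unique root of K(·;r) in (6/5, 4/3), one has D_0(r, u_b(r)) > 0 and −8/5 < μ_0(r, u_b(r)) < (3√115 − 65)/66. -/

import Mathlib

noncomputable section

/-- The cubic `K(u;r)`. -/
def Kc (u r : ℝ) : ℝ := 40*u^3 - (50*r + 169)*u^2 + (160*r + 224)*u - 120*r - 96

/-- `q_{f,+}(r) = 1 + √(r/(r + 1/10))`. -/
def qfp (r : ℝ) : ℝ := 1 + Real.sqrt (r / (r + 1/10))

/-- `q_{f,−}(r) = 1 − √(r/(r + 1/10))`. -/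
def qfm (r : ℝ) : ℝ := 1 - Real.sqrt (r / (r + 1/10))

/-- `q_{b,+}(r,u) = 1 + √((r + u − 2)/(r + 1/10))`. -/
def qbp (r u : ℝ) : ℝ := 1 + Real.sqrt ((r + u - 2) / (r + 1/10))

/-- `q_{b,−}(r,u) = 1 − √((r + u − 2)/(r + 1/10))`. -/
def qbm (r u : ℝ) : ℝ := 1 - Real.sqrt ((r + u - 2) / (r + 1/10))

/-- The singular wave-speed parameter `μ_0(r,u)`. -/
def mu0 (r u : ℝ) : ℝ :=
  (2*(2*qbm r u - qbp r u) + u*(2*qfm r - qfp r)) /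
    (qbp r u - 2*qbm r u + qfp r - 2*qfm r)

/-- The singular diffusion coefficient `D_0(r,u)`. -/
def D0 (r u : ℝ) : ℝ :=
  2*(2 - u)^2 / ((r + 1/10) * (2*qbm r u - qbp r u + 2*qfm r - qfp r)^2)

/-!
On the curve `K(u;r) = 0` the parameter `r` is a rational function of `u`, and the radicand of
`q_{b,±}` becomes the perfect square `((4 - 3u)/(2(u - 1)))²`, so `q_{b,±}` are rational in `u`.
The remaining root `a = √(r/(r + 1/10))` satisfies `a² · 4(u - 1)²(21 - 10u) = -P(u)` with
`P(u) = 40u³ - 169u² + 224u - 96`. After clearing the (positive) denominator, each bound on `μ_0`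
is a linear inequality in `a` with coefficients polynomial in `u` (and `√115`); comparing squares
turns it into the positivity of a polynomial in `u` on `(6/5, 4/3)`.
-/

open Real

lemma mu0_eq {r u a b : ℝ} (ha : √(r / (r + 1/10)) = a)
    (hb : √((r + u - 2) / (r + 1/10)) = b) :
    mu0 r u = (2 + u - 6 * b - 3 * u * a) / (3 * a + 3 * b - 2) := by
  unfold mu0 qbp qbm qfp qfm; rw [ha, hb]; ring

lemma D0_eq {r u a b : ℝ} (ha : √(r / (r + 1/10)) = a)
    (hb : √((r + u - 2) / (r + 1/10)) = b) :
    D0 r u = 2 * (2 - u)^2 / ((r + 1/10) * (3 * a + 3 * b - 2)^2) := by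
  unfold D0 qbp qbm qfp qfm; rw [ha, hb]; ring

lemma two_thirds_lt_sqrt_div {r : ℝ} (hr : 2/25 < r) : 2/3 < √(r / (r + 1/10)) := by
  rw [lt_sqrt (by norm_num), lt_div_iff₀ (by linarith)]
  linarith

section RootOfK

variable {u r : ℝ}

-- `K(u;r) = P(u) - r N(u)` with `N(u) = 50u² - 160u + 120`; the right side factors `P + N/10`.
lemma add_tenth_mul_of_Kc_eq_zero (hK : Kc u r = 0) :
    (r + 1/10) * (50 * u^2 - 160 * u + 120) = 4 * (u - 1)^2 * (10 * u - 21) := by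
  unfold Kc at hK; linear_combination -hK

lemma sqrt_mul_of_Kc_eq_zero (hu₁ : 6/5 < u) (hu₂ : u < 4/3) (hK : Kc u r = 0) :
    √((r + u - 2) / (r + 1/10)) * (2 * (u - 1)) = 4 - 3 * u := by
  have hN : 50 * u^2 - 160 * u + 120 < 0 := by nlinarith
  have hr : r + 1/10 ≠ 0 := by
    rintro h
    have := add_tenth_mul_of_Kc_eq_zero hK
    rw [h, zero_mul] at this
    nlinarith
  have hfrac : (r + u - 2) / (r + 1/10) = ((4 - 3 * u) / (2 * (u - 1)))^2 := by
    rw [div_pow, div_eq_div_iff hr (by nlinarith)]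
    unfold Kc at hK; linear_combination (1/10) * hK
  rw [hfrac, sqrt_sq (div_nonneg (by linarith) (by linarith)), div_mul_cancel₀]
  linarith

lemma sq_sqrt_mul_of_Kc_eq_zero (hr : 0 ≤ r) (hK : Kc u r = 0) :
    √(r / (r + 1/10))^2 * (4 * (u - 1)^2 * (21 - 10 * u)) =
      -(40 * u^3 - 169 * u^2 + 224 * u - 96) := by
  have hr' : 0 < r + 1/10 := by linarith
  rw [sq_sqrt (by positivity), div_mul_eq_mul_div, div_eq_iff hr'.ne']
  have := add_tenth_mul_of_Kc_eq_zero hK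
  unfold Kc at hK
  linear_combination r * this + (r + 1/10) * hK

end RootOfK

section Bounds

variable {u a b : ℝ} (hu₁ : 6/5 < u) (hu₂ : u < 4/3)
include hu₁ hu₂

lemma mu_denom_pos (ha : 2/3 < a) (hb : b * (2 * (u - 1)) = 4 - 3 * u) :
    0 < 3 * a + 3 * b - 2 := by
  have : 0 < b * (2 * (u - 1)) := by rw [hb]; linarith
  have := pos_of_mul_pos_left this (by linarith)
  linarith

variable (ha_sq : a^2 * (4 * (u - 1)^2 * (21 - 10 * u)) = -(40 * u^3 - 169 * u^2 + 224 * u - 96))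
include ha_sq

lemma lower_bound_sq_lt_sq :
    (5 * u^2 - 2 * u - 6)^2 < (3 * a * (8 - 5 * u) * (u - 1))^2 := by
  have hS : 0 < -1600 * u^4 + 10865 * u^3 - 26098 * u^2 + 25860 * u - 8712 := by
    have ht₁ : 0 ≤ u - 6/5 := by linarith
    have ht₂ : 0 ≤ 4/3 - u := by linarith
    nlinarith [mul_nonneg ht₁ ht₂, mul_nonneg (mul_nonneg ht₁ ht₁) ht₂, pow_nonneg ht₁ 4]
  have key : ((3 * a * (8 - 5 * u) * (u - 1))^2 - (5 * u^2 - 2 * u - 6)^2)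
      * (4 * (21 - 10 * u)) =
      (5 * u - 6) * (-1600 * u^4 + 10865 * u^3 - 26098 * u^2 + 25860 * u - 8712) := by
    linear_combination 9 * (8 - 5 * u)^2 * ha_sq
  have := pos_of_mul_pos_left (key ▸ mul_pos (by linarith) hS) (by linarith)
  linarith

lemma upper_bound_lt {w : ℝ} (ha : 0 < a) (hw : w^2 = 115) (hw₀ : 0 ≤ w) :
    132 * u^2 + 475 * u - 808 + (39 * u - 48) * w
      < 6 * a * (u - 1) * (66 * u + 3 * w - 65) := by
  have hw_lb : 10.72 < w := by nlinarith
  have hR : 0 < 6 * a * (u - 1) * (66 * u + 3 * w - 65) := by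
    have : 0 < 66 * u + 3 * w - 65 := by linarith
    have : 0 < u - 1 := by linarith
    positivity
  -- Near `u = 6/5` the squares compare the wrong way, but there the left side is negative.
  rcases le_or_gt u (121/100) with hu | hu
  · nlinarith [mul_nonneg (by linarith : (0:ℝ) ≤ 48 - 39 * u) (by linarith : (0:ℝ) ≤ w - 10.72),
      mul_nonneg (by linarith : (0:ℝ) ≤ 121/100 - u) (by linarith : (0:ℝ) ≤ u)]
  · have ht₁ : 0 ≤ u - 121/100 := by linarith
    have ht₂ : 0 ≤ 4/3 - u := by linarith
    have hB : 0 ≤ 13200 * u^3 - 239160 * u^2 + 677688 * u - 491472 := by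
      nlinarith [mul_nonneg ht₁ ht₂, pow_nonneg ht₁ 3]
    have hG : 0 < 464640 * u^4 - 2773100 * u^3 + 8561324/5 * u^2 + 214589584/25 * u
        - 223774896/25 := by
      nlinarith [mul_nonneg ht₁ ht₂, mul_nonneg (mul_nonneg ht₁ ht₁) ht₂, pow_nonneg ht₁ 4]
    have hZ : 0 < (464640 * u^4 - 2914604 * u^3 + 4276060 * u^2 + 1318768 * u - 3682416)
        + (13200 * u^3 - 239160 * u^2 + 677688 * u - 491472) * w := by
      nlinarith [mul_nonneg hB (by linarith : (0:ℝ) ≤ w - 10.72)]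
    have key : ((6 * a * (u - 1) * (66 * u + 3 * w - 65))^2
        - (132 * u^2 + 475 * u - 808 + (39 * u - 48) * w)^2) * (21 - 10 * u) =
        (4 - 3 * u) * ((464640 * u^4 - 2914604 * u^3 + 4276060 * u^2 + 1318768 * u - 3682416)
        + (13200 * u^3 - 239160 * u^2 + 677688 * u - 491472) * w) := by
      linear_combination 9 * (66 * u + 3 * w - 65)^2 * ha_sq
        + (11970 * u^3 - 55692 * u^2 + 83520 * u - 40608) * hw
    have := pos_of_mul_pos_left (key ▸ mul_pos (by linarith) hZ) (by linarith)
    exact (abs_lt_of_sq_lt_sq' (by linarith) hR.le).2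

variable (ha : 2/3 < a) (hb : b * (2 * (u - 1)) = 4 - 3 * u)
include ha hb

lemma neg_eight_fifths_lt_mu :
    -8/5 < (2 + u - 6 * b - 3 * u * a) / (3 * a + 3 * b - 2) := by
  rw [lt_div_iff₀ (mu_denom_pos hu₁ hu₂ ha hb)]
  have hu : 0 < u - 1 := by linarith
  have hX : 0 < 3 * a * (8 - 5 * u) * (u - 1) := by
    have : 0 < 8 - 5 * u := by linarith
    positivity
  have := (abs_lt_of_sq_lt_sq' (lower_bound_sq_lt_sq hu₁ hu₂ ha_sq) hX.le).1
  nlinarith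

lemma mu_lt_upper {w : ℝ} (hw : w^2 = 115) (hw₀ : 0 ≤ w) :
    (2 + u - 6 * b - 3 * u * a) / (3 * a + 3 * b - 2) < (3 * w - 65) / 66 := by
  rw [div_lt_div_iff₀ (mu_denom_pos hu₁ hu₂ ha hb) (by norm_num)]
  have hu : 0 < u - 1 := by linarith
  have := upper_bound_lt hu₁ hu₂ ha_sq (by linarith) hw hw₀
  nlinarith

end Bounds

theorem stmt9 (r ub : ℝ) (hr : 2/3 < r) (hub : ub ∈ Set.Ioo (6/5 : ℝ) (4/3))
    (hK : Kc ub r = 0) :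
    0 < D0 r ub ∧ -8/5 < mu0 r ub ∧ mu0 r ub < (3 * Real.sqrt 115 - 65) / 66 := by
  obtain ⟨hu₁, hu₂⟩ := hub
  have hb := sqrt_mul_of_Kc_eq_zero hu₁ hu₂ hK
  have ha_sq := sq_sqrt_mul_of_Kc_eq_zero (by linarith) hK
  have ha := two_thirds_lt_sqrt_div (by linarith : 2/25 < r)
  rw [mu0_eq rfl rfl, D0_eq rfl rfl]
  refine ⟨?_, neg_eight_fifths_lt_mu hu₁ hu₂ ha_sq ha hb,
    mu_lt_upper hu₁ hu₂ ha_sq ha hb (sq_sqrt (by norm_num)) (sqrt_nonneg _)⟩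
  have h2u : 0 < 2 - ub := by linarith
  exact div_pos (by positivity) (mul_pos (by linarith) (pow_pos (mu_denom_pos hu₁ hu₂ ha hb) 2))
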